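/- arXiv:1904.05273 — 4 statements merged into one kernel-verified Lean document; each statement's English description precedes it below -/
import Mathlib

section
/- Consider the block matrix N = [[diag(0, Ã − σI_{n−1}), B'], [C', D']] where Ã − σI_{n−1} is invertible of size n−1, B' is n×m, C' is r×n, D' is r×m, and let B'₂, C'₂ denote the last n−1 rows of B' and the last n−1 columns of C'. If the first row of B' is zero, the first column of C' is zero, and C'₂ (Ã − σI_{n−1})^{−1} B'₂ − D' = 0, then rank(N) = n − 1; in particular rank(N) < n + min(m,r). -/
open Matrix

/-- Rank of the block matrix `N = [[diag(0, Ã − σI), B'],[C', D']]` when the first row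
of `B'` is zero, the first column of `C'` is zero, and the Schur-type quantity
`C'₂ (Ã − σI)⁻¹ B'₂ − D'` vanishes: `rank N = n − 1` (here the total state dimension is
`n = 1 + k`, so the rank is `k`). -/
theorem stmt_2 {k m r : ℕ} (σ : ℂ) (At : Matrix (Fin k) (Fin k) ℂ)
    (B' : Matrix (Fin 1 ⊕ Fin k) (Fin m) ℂ)
    (C' : Matrix (Fin r) (Fin 1 ⊕ Fin k) ℂ)
    (D' : Matrix (Fin r) (Fin m) ℂ)
    (hinv : IsUnit (At - σ • (1 : Matrix (Fin k) (Fin k) ℂ)))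
    (hB : ∀ j, B' (Sum.inl 0) j = 0)
    (hC : ∀ i, C' i (Sum.inl 0) = 0)
    (hSchur : (C'.submatrix id Sum.inr) * (At - σ • (1 : Matrix (Fin k) (Fin k) ℂ))⁻¹ *
        (B'.submatrix Sum.inr id) - D' = 0) :
    (Matrix.fromBlocks
        (Matrix.fromBlocks (0 : Matrix (Fin 1) (Fin 1) ℂ) 0 0
          (At - σ • (1 : Matrix (Fin k) (Fin k) ℂ))) B' C' D').rank = k := by
  set M : Matrix (Fin k) (Fin k) ℂ := At - σ • (1 : Matrix (Fin k) (Fin k) ℂ) with hM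
  set N : Matrix ((Fin 1 ⊕ Fin k) ⊕ Fin r) ((Fin 1 ⊕ Fin k) ⊕ Fin m) ℂ :=
    Matrix.fromBlocks
      (Matrix.fromBlocks (0 : Matrix (Fin 1) (Fin 1) ℂ) 0 0 M) B' C' D' with hN
  have hdet : IsUnit M.det := (Matrix.isUnit_iff_isUnit_det M).mp hinv
  have hMinv : M⁻¹ * M = 1 := Matrix.nonsing_inv_mul M hdet
  have hD : (C'.submatrix id Sum.inr) * M⁻¹ * (B'.submatrix Sum.inr id) = D' := by
    have := hSchur
    rwa [sub_eq_zero] at this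
  -- Upper bound: N factors through rank-k matrices
  set U : Matrix ((Fin 1 ⊕ Fin k) ⊕ Fin r) (Fin k) ℂ :=
    Matrix.of fun x j => match x with
      | Sum.inl (Sum.inl _) => 0
      | Sum.inl (Sum.inr i) => (1 : Matrix (Fin k) (Fin k) ℂ) i j
      | Sum.inr i => ((C'.submatrix id Sum.inr) * M⁻¹) i j with hU
  set V : Matrix (Fin k) ((Fin 1 ⊕ Fin k) ⊕ Fin m) ℂ :=
    Matrix.of fun i y => match y with
      | Sum.inl (Sum.inl _) => 0
      | Sum.inl (Sum.inr j) => M i j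
      | Sum.inr j => B' (Sum.inr i) j with hV
  have hfac : N = U * V := by
    ext x y
    cases x with
    | inl x =>
      cases x with
      | inl x =>
        have hx : x = 0 := Subsingleton.elim _ _
        subst hx
        cases y with
        | inl y =>
          cases y with
          | inl y =>
            simp [hN, hU, hV, Matrix.mul_apply, Matrix.fromBlocks]
          | inr y =>
            simp [hN, hU, hV, Matrix.mul_apply, Matrix.fromBlocks]
        | inr y =>
          simp [hN, hU, hV, Matrix.mul_apply, Matrix.fromBlocks, hB]
      | inr i =>
        cases y with
        | inl y =>
          cases y with
          | inl y =>
            simp [hN, hU, hV, Matrix.mul_apply, Matrix.fromBlocks]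
          | inr j =>
            have : ((1 : Matrix (Fin k) (Fin k) ℂ) * M) i j = M i j := by rw [Matrix.one_mul]
            simpa [hN, hU, hV, Matrix.mul_apply, Matrix.fromBlocks] using this.symm
        | inr j =>
          have : ((1 : Matrix (Fin k) (Fin k) ℂ) * (B'.submatrix Sum.inr id)) i j
              = B' (Sum.inr i) j := by rw [Matrix.one_mul]; rfl
          simpa [hN, hU, hV, Matrix.mul_apply, Matrix.fromBlocks] using this.symm
    | inr i =>
      cases y with
      | inl y =>
        cases y with
        | inl y =>
          have hy : y = (0 : Fin 1) := Subsingleton.elim _ _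
          subst hy
          simp [hN, hU, hV, Matrix.mul_apply, Matrix.fromBlocks, hC]
        | inr j =>
          have : ((C'.submatrix id Sum.inr) * M⁻¹ * M) i j = C' i (Sum.inr j) := by
            rw [Matrix.mul_assoc, hMinv, Matrix.mul_one]; rfl
          simpa [hN, hU, hV, Matrix.mul_apply, Matrix.fromBlocks] using this.symm
      | inr j =>
        have : ((C'.submatrix id Sum.inr) * M⁻¹ * (B'.submatrix Sum.inr id)) i j
            = D' i j := by rw [hD]
        simpa [hN, hU, hV, Matrix.mul_apply, Matrix.fromBlocks] using this.symm
  have hub : N.rank ≤ k := by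
    rw [hfac]
    calc (U * V).rank ≤ U.rank := Matrix.rank_mul_le_left U V
    _ ≤ Fintype.card (Fin k) := Matrix.rank_le_card_width U
    _ = k := Fintype.card_fin k
  -- Lower bound: M is a "submatrix" of N obtained by multiplying with identity submatrices
  have hsub : N.submatrix (Sum.inl ∘ Sum.inr) (Sum.inl ∘ Sum.inr) = M := by
    ext i j
    simp [hN, Matrix.fromBlocks]
  have hPN : ((1 : Matrix ((Fin 1 ⊕ Fin k) ⊕ Fin r) ((Fin 1 ⊕ Fin k) ⊕ Fin r) ℂ).submatrix
      (Sum.inl ∘ Sum.inr) (Equiv.refl _)) * N = N.submatrix (Sum.inl ∘ Sum.inr) id := by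
    rw [Matrix.one_submatrix_mul]
    rfl
  have hNQ : (N.submatrix (Sum.inl ∘ Sum.inr) id) *
      ((1 : Matrix ((Fin 1 ⊕ Fin k) ⊕ Fin m) ((Fin 1 ⊕ Fin k) ⊕ Fin m) ℂ).submatrix
        (Equiv.refl _) (Sum.inl ∘ Sum.inr))
      = N.submatrix (Sum.inl ∘ Sum.inr) (Sum.inl ∘ Sum.inr) := by
    rw [Matrix.mul_submatrix_one]
    rfl
  have hlb : k ≤ N.rank := by
    have h1 : M.rank = k := by
      rw [Matrix.rank_of_isUnit M hinv, Fintype.card_fin]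
    calc k = M.rank := h1.symm
      _ = (N.submatrix (Sum.inl ∘ Sum.inr) id *
          ((1 : Matrix ((Fin 1 ⊕ Fin k) ⊕ Fin m) ((Fin 1 ⊕ Fin k) ⊕ Fin m) ℂ).submatrix
            (Equiv.refl _) (Sum.inl ∘ Sum.inr))).rank := by rw [hNQ, hsub]
      _ ≤ (N.submatrix (Sum.inl ∘ Sum.inr) id).rank := Matrix.rank_mul_le_left _ _
      _ = (((1 : Matrix ((Fin 1 ⊕ Fin k) ⊕ Fin r) ((Fin 1 ⊕ Fin k) ⊕ Fin r) ℂ).submatrix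
            (Sum.inl ∘ Sum.inr) (Equiv.refl _)) * N).rank := by rw [hPN]
      _ ≤ N.rank := Matrix.rank_mul_le_right _ _
  exact le_antisymm hub hlb
end

section
/- Suppose A = diag(σ, Ã) with σ ∉ sp(Ã), B = [B₁ … B_v], C = [C₁; …; C_v], D = (D_{ij}), and suppose there exist a permutation i₁,…,i_v of {1,…,v} and w ∈ {1,…,v−1} such that: (a) the first row of B_{i₁},…,B_{i_w} is zero, (b) the first column of C_{i_{w+1}},…,C_{i_v} is zero, and (c) C_γ diag(0,(Ã−σI)^{−1}) B_η − D_{γη} = 0 for all η ∈ {i₁,…,i_w}, γ ∈ {i_{w+1},…,i_v}. Then for every block-diagonal K_D with I − D K_D invertible, σ is an eigenvalue of A + B K_D (I − D K_D)^{−1} C; i.e., σ is a decentralized fixed mode. -/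
open Matrix

/-- Theorem 1 (Lavaei–Aghdam sufficient condition for a DFM). Let
`A = diag(σ, Ã)` with `σ ∉ sp(Ã)`. Input channels `j` belong to station `inSta j`,
output channels `i` to station `outSta i`. Suppose there is a set `T` of stations
(the stations `{i₁,…,i_w}` of a permutation, with `T` and its complement nonempty)
such that: (a) the first row of `B_η` is zero for stations `η ∈ T`; (b) the first
column of `C_γ` is zero for stations `γ ∉ T`; (c) the block
`M^{γ,η} = C_γ diag(0,(Ã−σI)⁻¹) B_η − D_{γη}` vanishes for `η ∈ T`, `γ ∉ T`.
Then `σ` is a decentralized fixed mode: `σ ∈ sp(A + B K (I − D K)⁻¹ C)` for every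
block-diagonal `K` with `I − D K` invertible. -/
theorem stmt_5 {k m r v : ℕ} (σ : ℂ) (At : Matrix (Fin k) (Fin k) ℂ)
    (B : Matrix (Fin 1 ⊕ Fin k) (Fin m) ℂ)
    (C : Matrix (Fin r) (Fin 1 ⊕ Fin k) ℂ)
    (D : Matrix (Fin r) (Fin m) ℂ)
    (inSta : Fin m → Fin v) (outSta : Fin r → Fin v)
    (hσ : σ ∉ spectrum ℂ At)
    (T : Finset (Fin v)) (hT : T.Nonempty) (hTc : Tᶜ.Nonempty)
    (hB : ∀ j, inSta j ∈ T → B (Sum.inl 0) j = 0)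
    (hC : ∀ i, outSta i ∉ T → C i (Sum.inl 0) = 0)
    (hM : ∀ i j, inSta j ∈ T → outSta i ∉ T →
      (C * Matrix.fromBlocks (0 : Matrix (Fin 1) (Fin 1) ℂ) 0 0
          (At - σ • (1 : Matrix (Fin k) (Fin k) ℂ))⁻¹ * B - D) i j = 0) :
    ∀ K : Matrix (Fin m) (Fin r) ℂ,
      (∀ i j, inSta i ≠ outSta j → K i j = 0) →
      IsUnit ((1 : Matrix (Fin r) (Fin r) ℂ) - D * K) →
      σ ∈ spectrum ℂ
        (Matrix.fromBlocks (σ • (1 : Matrix (Fin 1) (Fin 1) ℂ)) 0 0 At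
          + B * K * ((1 : Matrix (Fin r) (Fin r) ℂ) - D * K)⁻¹ * C) := by
  classical
  intro K hKb hKu
  set R : Matrix (Fin k) (Fin k) ℂ := At - σ • (1 : Matrix (Fin k) (Fin k) ℂ) with hRdef
  have hR : IsUnit R := by
    rw [spectrum.mem_iff, not_not] at hσ
    have h2 : R = -((algebraMap ℂ (Matrix (Fin k) (Fin k) ℂ)) σ - At) := by
      rw [Algebra.algebraMap_eq_smul_one, neg_sub, hRdef]
    rw [h2]; exact hσ.neg
  have hRdet : IsUnit R.det := (Matrix.isUnit_iff_isUnit_det R).mp hR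
  have hRinv : R⁻¹ * R = 1 := Matrix.nonsing_inv_mul R hRdet
  set b : Fin m → ℂ := fun j => B (Sum.inl 0) j with hbdef
  set Bt : Matrix (Fin k) (Fin m) ℂ := Matrix.of (fun s j => B (Sum.inr s) j) with hBtdef
  set Ct : Matrix (Fin r) (Fin k) ℂ := Matrix.of (fun i s => C i (Sum.inr s)) with hCtdef
  set N : Matrix (Fin r) (Fin m) ℂ := Ct * R⁻¹ * Bt - D with hNdef
  -- the statement's M matrix equals N
  have hCPB : C * Matrix.fromBlocks (0 : Matrix (Fin 1) (Fin 1) ℂ) 0 0 R⁻¹ * B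
      = Ct * R⁻¹ * Bt := by
    ext i j
    simp only [Matrix.mul_apply, Matrix.fromBlocks, Fintype.sum_sum_type, Matrix.of_apply,
      Sum.elim_inl, Sum.elim_inr, Matrix.zero_apply, mul_zero, zero_mul, Finset.sum_const_zero,
      add_zero, zero_add, hCtdef, hBtdef]
  have hN : ∀ i j, inSta j ∈ T → outSta i ∉ T → N i j = 0 := by
    intro i j hj hi
    have h := hM i j hj hi
    rwa [hCPB, ← hNdef] at h
  -- feedback pieces
  set L : Matrix (Fin m) (Fin r) ℂ :=
    Matrix.of (fun j i => if outSta i ∈ T then 0 else K j i) with hLdef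
  set β : Fin r → ℂ := b ᵥ* L with hβdef
  set Q : Matrix (Fin r) (Fin r) ℂ := 1 + N * L with hQdef
  obtain ⟨ξ₀, ζ, hmain, hnz⟩ :
      ∃ (ξ₀ : ℂ) (ζ : Fin r → ℂ), ξ₀ • β + ζ ᵥ* Q = 0 ∧ (ξ₀ = 1 ∨ ζ ≠ 0) := by
    by_cases hQ : IsUnit Q.det
    · refine ⟨1, -(β ᵥ* Q⁻¹), ?_, Or.inl rfl⟩
      rw [one_smul, Matrix.neg_vecMul, Matrix.vecMul_vecMul,
        Matrix.nonsing_inv_mul Q hQ, Matrix.vecMul_one]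
      simp
    · have hdQ : Q.det = 0 := by
        by_contra h; exact hQ (isUnit_iff_ne_zero.mpr h)
      obtain ⟨ζ, hζ, h0⟩ := Matrix.exists_vecMul_eq_zero_iff.mpr hdQ
      exact ⟨0, ζ, by simp [h0], Or.inr hζ⟩
  have hL0 : ∀ j i, outSta i ∈ T → L j i = 0 := by
    intro j i h; simp [hLdef, h]
  -- ζ is supported on outputs outside T
  have hβ0 : ∀ i, outSta i ∈ T → β i = 0 := by
    intro i hi
    rw [hβdef]
    simp only [Matrix.vecMul, dotProduct]
    exact Finset.sum_eq_zero fun j _ => by rw [hL0 j i hi, mul_zero]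
  have hNL0 : ∀ i, outSta i ∈ T → ∀ x, (N * L) x i = 0 := by
    intro i hi x
    rw [Matrix.mul_apply]
    exact Finset.sum_eq_zero fun j _ => by rw [hL0 j i hi, mul_zero]
  have hζ0 : ∀ i, outSta i ∈ T → ζ i = 0 := by
    intro i hi
    have h := congrFun hmain i
    have hQi : (ζ ᵥ* Q) i = ζ i + (ζ ᵥ* (N * L)) i := by
      rw [hQdef, Matrix.vecMul_add, Matrix.vecMul_one, Pi.add_apply]
    have hz : (ζ ᵥ* (N * L)) i = 0 := by
      simp only [Matrix.vecMul, dotProduct]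
      exact Finset.sum_eq_zero fun x _ => by rw [hNL0 i hi x, mul_zero]
    simp only [Pi.add_apply, Pi.smul_apply, Pi.zero_apply, smul_eq_mul] at h
    rw [hQi, hz, hβ0 i hi, mul_zero, add_zero, zero_add] at h
    exact h
  -- the row vector pieces
  set ξt : Fin k → ℂ := ζ ᵥ* (Ct * R⁻¹) with hξtdef
  set ξ : Fin 1 ⊕ Fin k → ℂ := Sum.elim (fun _ => ξ₀) ξt with hξdef
  set u : Fin m → ℂ := ξ₀ • b + ζ ᵥ* N with hudef
  have hu0 : ∀ j, inSta j ∈ T → u j = 0 := by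
    intro j hj
    have h1 : (ζ ᵥ* N) j = 0 := by
      simp only [Matrix.vecMul, dotProduct]
      refine Finset.sum_eq_zero fun i _ => ?_
      by_cases hi : outSta i ∈ T
      · rw [hζ0 i hi, zero_mul]
      · rw [hN i j hj hi, mul_zero]
    rw [hudef]
    simp [h1, hB j hj, hbdef]
  have huKL : u ᵥ* K = u ᵥ* L := by
    funext i
    simp only [Matrix.vecMul, dotProduct]
    refine Finset.sum_congr rfl fun j _ => ?_
    by_cases hj : inSta j ∈ T
    · rw [hu0 j hj, zero_mul, zero_mul]
    · by_cases hi : outSta i ∈ T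
      · rw [hKb j i (fun he => hj (he ▸ hi)), hL0 j i hi]
      · simp [hLdef, hi]
  have hξBt : ξt ᵥ* Bt = ζ ᵥ* N + ζ ᵥ* D := by
    rw [hξtdef, Matrix.vecMul_vecMul, ← Matrix.vecMul_add]
    congr 1
    rw [hNdef, sub_add_cancel]
  have hξB : ξ ᵥ* B = u + ζ ᵥ* D := by
    funext j
    have h1 : (ξ ᵥ* B) j = ξ₀ * b j + (ξt ᵥ* Bt) j := by
      simp [Matrix.vecMul, dotProduct, Fintype.sum_sum_type, hξdef, hBtdef, hbdef]
    rw [h1, hξBt]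
    simp [hudef]
    ring
  have hXi : ξt ᵥ* (σ • (1 : Matrix (Fin k) (Fin k) ℂ) - At) = -(ζ ᵥ* Ct) := by
    have h1 : σ • (1 : Matrix (Fin k) (Fin k) ℂ) - At = -R := by rw [hRdef, neg_sub]
    rw [h1, Matrix.vecMul_neg, hξtdef, Matrix.vecMul_vecMul, Matrix.mul_assoc, hRinv,
      Matrix.mul_one]
  -- the big block matrix
  set S : Matrix (Fin 1 ⊕ Fin k) (Fin 1 ⊕ Fin k) ℂ :=
    Matrix.fromBlocks 0 0 0 (σ • (1 : Matrix (Fin k) (Fin k) ℂ) - At) with hSdef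
  set Φ : Matrix ((Fin 1 ⊕ Fin k) ⊕ Fin r) ((Fin 1 ⊕ Fin k) ⊕ Fin r) ℂ :=
    Matrix.fromBlocks S (B * K) C (1 - D * K) with hΦdef
  set w : (Fin 1 ⊕ Fin k) ⊕ Fin r → ℂ := Sum.elim ξ ζ with hwdef
  have E1 : ξ ᵥ* S + ζ ᵥ* C = 0 := by
    funext x
    cases x with
    | inl z =>
      have h1 : (ξ ᵥ* S) (Sum.inl z) = 0 := by
        simp [hSdef, Matrix.vecMul, dotProduct, Fintype.sum_sum_type, Matrix.fromBlocks]
      have h2 : (ζ ᵥ* C) (Sum.inl z) = 0 := by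
        simp only [Matrix.vecMul, dotProduct]
        refine Finset.sum_eq_zero fun i _ => ?_
        by_cases hi : outSta i ∈ T
        · rw [hζ0 i hi, zero_mul]
        · have : z = 0 := Subsingleton.elim z 0
          rw [this, hC i hi, mul_zero]
      simp [h1, h2]
    | inr s =>
      have h1 : (ξ ᵥ* S) (Sum.inr s) =
          (ξt ᵥ* (σ • (1 : Matrix (Fin k) (Fin k) ℂ) - At)) s := by
        simp [hSdef, Matrix.vecMul, dotProduct, Fintype.sum_sum_type, Matrix.fromBlocks,
          hξdef]
      have h2 : (ζ ᵥ* C) (Sum.inr s) = (ζ ᵥ* Ct) s := by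
        simp [Matrix.vecMul, dotProduct, hCtdef]
      rw [Pi.add_apply, h1, h2, hXi, Pi.zero_apply, Pi.neg_apply, neg_add_cancel]
  have E2 : ξ ᵥ* (B * K) + ζ ᵥ* ((1 : Matrix (Fin r) (Fin r) ℂ) - D * K) = 0 := by
    have h1 : ξ ᵥ* (B * K) = u ᵥ* L + ζ ᵥ* (D * K) := by
      rw [← Matrix.vecMul_vecMul, hξB, Matrix.add_vecMul, huKL, Matrix.vecMul_vecMul]
    have h2 : ζ ᵥ* ((1 : Matrix (Fin r) (Fin r) ℂ) - D * K) = ζ - ζ ᵥ* (D * K) := by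
      rw [Matrix.vecMul_sub, Matrix.vecMul_one]
    have h3 : u ᵥ* L = ξ₀ • β + ζ ᵥ* (N * L) := by
      rw [hudef, Matrix.add_vecMul, Matrix.smul_vecMul, Matrix.vecMul_vecMul, hβdef]
    have h4 : ζ ᵥ* Q = ζ + ζ ᵥ* (N * L) := by
      rw [hQdef, Matrix.vecMul_add, Matrix.vecMul_one]
    rw [h1, h2, h3]
    have h5 := hmain
    rw [h4] at h5
    calc ξ₀ • β + ζ ᵥ* (N * L) + ζ ᵥ* (D * K) + (ζ - ζ ᵥ* (D * K))
        = ξ₀ • β + (ζ + ζ ᵥ* (N * L)) := by abel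
      _ = 0 := h5
  have hw : w ᵥ* Φ = 0 := by
    rw [hΦdef, hwdef, Matrix.vecMul_fromBlocks]
    have hcl : Sum.elim ξ ζ ∘ Sum.inl = ξ := Sum.elim_comp_inl _ _
    have hcr : Sum.elim ξ ζ ∘ Sum.inr = ζ := Sum.elim_comp_inr _ _
    rw [hcl, hcr, E1, E2]
    funext x; cases x <;> rfl
  have hwne : w ≠ 0 := by
    rcases hnz with h | h
    · intro hw0
      have := congrFun hw0 (Sum.inl (Sum.inl 0))
      simp [hwdef, hξdef, h] at this
    · intro hw0
      apply h
      funext i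
      exact congrFun hw0 (Sum.inr i)
  have hdetΦ : Φ.det = 0 := Matrix.exists_vecMul_eq_zero_iff.mp ⟨w, hwne, hw⟩
  obtain ⟨iv⟩ := hKu.nonempty_invertible
  have hsch := Matrix.det_fromBlocks₂₂ S (B * K) C ((1 : Matrix (Fin r) (Fin r) ℂ) - D * K)
  rw [Matrix.invOf_eq_nonsing_inv] at hsch
  rw [← hΦdef] at hsch
  have hdK : ((1 : Matrix (Fin r) (Fin r) ℂ) - D * K).det ≠ 0 := by
    have := (Matrix.isUnit_iff_isUnit_det _).mp hKu
    exact this.ne_zero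
  have hdet2 : (S - B * K * ((1 : Matrix (Fin r) (Fin r) ℂ) - D * K)⁻¹ * C).det = 0 := by
    rw [hdetΦ] at hsch
    rcases mul_eq_zero.mp hsch.symm with h | h
    · exact absurd h hdK
    · exact h
  rw [spectrum.mem_iff]
  intro hu'
  have hval : IsUnit ((algebraMap ℂ (Matrix (Fin 1 ⊕ Fin k) (Fin 1 ⊕ Fin k) ℂ)) σ
      - (Matrix.fromBlocks (σ • (1 : Matrix (Fin 1) (Fin 1) ℂ)) 0 0 At
        + B * K * ((1 : Matrix (Fin r) (Fin r) ℂ) - D * K)⁻¹ * C)).det :=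
    (Matrix.isUnit_iff_isUnit_det _).mp hu'
  have heq : (algebraMap ℂ (Matrix (Fin 1 ⊕ Fin k) (Fin 1 ⊕ Fin k) ℂ)) σ
      - (Matrix.fromBlocks (σ • (1 : Matrix (Fin 1) (Fin 1) ℂ)) 0 0 At
        + B * K * ((1 : Matrix (Fin r) (Fin r) ℂ) - D * K)⁻¹ * C)
      = S - B * K * ((1 : Matrix (Fin r) (Fin r) ℂ) - D * K)⁻¹ * C := by
    rw [Algebra.algebraMap_eq_smul_one]
    have h1 : σ • (1 : Matrix (Fin 1 ⊕ Fin k) (Fin 1 ⊕ Fin k) ℂ)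
        - Matrix.fromBlocks (σ • (1 : Matrix (Fin 1) (Fin 1) ℂ)) 0 0 At = S := by
      rw [← Matrix.fromBlocks_one, Matrix.fromBlocks_smul, hSdef]
      ext x y
      rcases x with x | x <;> rcases y with y | y <;>
        simp [Matrix.fromBlocks]
    rw [sub_add_eq_sub_sub, h1]
  rw [heq, hdet2] at hval
  exact (by simp : ¬ IsUnit (0 : ℂ)) hval
end

section
/- Proposition 1 (Resemblant DFM): Let σ be a simple eigenvalue of A = diag(σ, Ã), σ ∉ sp(Ã). Suppose for some permutation i₁,…,i_v and index w, all entries |B_η^1| (first rows of B_{i₁},…,B_{i_w}), |C_γ^1| (first columns of C_{i_{w+1}},…,C_{i_v}), and the entries of M^{γ,η} = C_γ diag(0,(Ã−σI)^{−1}) B_η − D_{γη} are each at most ε. Then the perturbed system obtained by setting these entries exactly to zero has σ as a DFM, and the perturbation of (B, C, D) has Frobenius norm at most ε times the square root of the number of perturbed entries. -/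
open Matrix


-- auxiliary: multiplying on the right by a diagonal matrix, entrywise
lemma mulK_apply {m n : Type*} [Fintype n] [DecidableEq n] (X : Matrix m n ℂ)
    {K : Matrix n n ℂ} (hK : K.IsDiag) (i : m) (j : n) :
    (X * K) i j = X i j * K j j := by
  rw [Matrix.mul_apply]
  refine Finset.sum_eq_single j (fun b _ hbj => ?_) (by simp)
  rw [hK hbj, mul_zero]

/-- Proposition 1 (Resemblant DFM), scalar stations `m_i = r_i = 1`. Let `σ` be a simple
eigenvalue of `A = diag(σ, Ã)`, `σ ∉ sp(Ã)`, and let `T` be the station set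
`{i₁,…,i_w}` of a permutation/partition. If all entries `|B_η^1|` (`η ∈ T`),
`|C_γ^1|` (`γ ∉ T`) and the entries of `M^{γ,η} = C_γ diag(0,(Ã−σI)⁻¹) B_η − D_{γη}`
are at most `ε`, then the perturbed system `(B',C',D')` obtained by setting these
entries exactly to zero has `σ` as a DFM, and the perturbation has Frobenius norm at
most `ε` times the square root of the number of perturbed entries. -/
theorem stmt_12 {k v : ℕ} (σ : ℂ) (At : Matrix (Fin k) (Fin k) ℂ)
    (B B' : Matrix (Fin 1 ⊕ Fin k) (Fin v) ℂ)
    (C C' : Matrix (Fin v) (Fin 1 ⊕ Fin k) ℂ)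
    (D D' : Matrix (Fin v) (Fin v) ℂ)
    (G : Matrix (Fin 1 ⊕ Fin k) (Fin 1 ⊕ Fin k) ℂ)
    (hσ : σ ∉ spectrum ℂ At)
    (hG : G = Matrix.fromBlocks (0 : Matrix (Fin 1) (Fin 1) ℂ) 0 0
      (At - σ • (1 : Matrix (Fin k) (Fin k) ℂ))⁻¹)
    (T : Finset (Fin v)) (hT : T.Nonempty) (hTc : Tᶜ.Nonempty)
    (ε : ℝ) (hε : 0 ≤ ε)
    (hBsmall : ∀ j, j ∈ T → ‖B (Sum.inl 0) j‖ ≤ ε)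
    (hCsmall : ∀ i, i ∉ T → ‖C i (Sum.inl 0)‖ ≤ ε)
    (hMsmall : ∀ i j, i ∉ T → j ∈ T → ‖(C * G * B - D) i j‖ ≤ ε)
    (hB' : B' = Matrix.of fun i j => if i = Sum.inl 0 ∧ j ∈ T then 0 else B i j)
    (hC' : C' = Matrix.of fun i j => if j = Sum.inl 0 ∧ i ∉ T then 0 else C i j)
    (hD' : D' = Matrix.of fun i j => if i ∉ T ∧ j ∈ T then (C * G * B) i j else D i j) :
    (∀ K : Matrix (Fin v) (Fin v) ℂ, K.IsDiag →
      IsUnit ((1 : Matrix (Fin v) (Fin v) ℂ) - D' * K) →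
      σ ∈ spectrum ℂ
        (Matrix.fromBlocks (σ • (1 : Matrix (Fin 1) (Fin 1) ℂ)) 0 0 At
          + B' * K * ((1 : Matrix (Fin v) (Fin v) ℂ) - D' * K)⁻¹ * C')) ∧
    Real.sqrt ((∑ i, ∑ j, ‖B i j - B' i j‖ ^ 2) + (∑ i, ∑ j, ‖C i j - C' i j‖ ^ 2)
        + (∑ i, ∑ j, ‖D i j - D' i j‖ ^ 2))
      ≤ ε * Real.sqrt ((T.card + Tᶜ.card + Tᶜ.card * T.card : ℕ)) := by
  refine ⟨?_, ?_⟩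
  · intro K hK hKu
    -- invertibility facts
    have hAtU : IsUnit (σ • (1 : Matrix (Fin k) (Fin k) ℂ) - At) := by
      by_contra h
      exact hσ (spectrum.mem_iff.mpr (by rwa [Algebra.algebraMap_eq_smul_one]))
    have hAtU' : IsUnit (At - σ • (1 : Matrix (Fin k) (Fin k) ℂ)) := by
      rw [← neg_sub]; exact hAtU.neg
    have hX : (At - σ • (1 : Matrix (Fin k) (Fin k) ℂ))⁻¹
        * (At - σ • (1 : Matrix (Fin k) (Fin k) ℂ)) = 1 :=
      Matrix.nonsing_inv_mul _ ((Matrix.isUnit_iff_isUnit_det _).mp hAtU')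
    -- notation
    set A0 : Matrix (Fin 1 ⊕ Fin k) (Fin 1 ⊕ Fin k) ℂ :=
      Matrix.fromBlocks (σ • (1 : Matrix (Fin 1) (Fin 1) ℂ)) 0 0 At with hA0
    set P11 : Matrix (Fin 1 ⊕ Fin k) (Fin 1 ⊕ Fin k) ℂ :=
      Matrix.fromBlocks (0 : Matrix (Fin 1) (Fin 1) ℂ) 0 0
        (σ • (1 : Matrix (Fin k) (Fin k) ℂ) - At) with hP11def
    have hP11 : σ • (1 : Matrix (Fin 1 ⊕ Fin k) (Fin 1 ⊕ Fin k) ℂ) - A0 = P11 := by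
      ext i j
      rcases i with i | i <;> rcases j with j | j <;>
        simp [hA0, hP11def, Matrix.sub_apply, Matrix.smul_apply, Matrix.one_apply,
          smul_eq_mul]
    set W : Matrix (Fin v) (Fin 1 ⊕ Fin k) ℂ :=
      Matrix.of (fun i x => if i ∈ T then 0 else (C * G) i x) with hW
    set E : Matrix ((Fin 1 ⊕ Fin k) ⊕ Fin v) ((Fin 1 ⊕ Fin k) ⊕ Fin v) ℂ :=
      Matrix.fromBlocks 1 0 W 1 with hE
    set P : Matrix ((Fin 1 ⊕ Fin k) ⊕ Fin v) ((Fin 1 ⊕ Fin k) ⊕ Fin v) ℂ :=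
      Matrix.fromBlocks P11 (B' * K) C' (1 - D' * K) with hP
    have hdetE : E.det = 1 := by
      rw [hE, Matrix.det_fromBlocks_zero₁₂]; simp
    have hMeq : E * P = Matrix.fromBlocks P11 (B' * K) (W * P11 + C')
        (W * (B' * K) + (1 - D' * K)) := by
      rw [hE, hP, Matrix.fromBlocks_multiply]
      simp
    set M : Matrix ((Fin 1 ⊕ Fin k) ⊕ Fin v) ((Fin 1 ⊕ Fin k) ⊕ Fin v) ℂ := E * P with hMdef
    -- pieces
    have hGP11 : G * P11 = (Matrix.fromBlocks 0 0 0 (-1) :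
        Matrix (Fin 1 ⊕ Fin k) (Fin 1 ⊕ Fin k) ℂ) := by
      rw [hG, hP11def, Matrix.fromBlocks_multiply]
      have : (At - σ • (1 : Matrix (Fin k) (Fin k) ℂ))⁻¹
          * (σ • (1 : Matrix (Fin k) (Fin k) ℂ) - At) = -1 := by
        rw [← neg_sub At, Matrix.mul_neg, hX]
      simp [this]
    have hGB' : G * B' = G * B := by
      ext x j
      rw [Matrix.mul_apply, Matrix.mul_apply]
      refine Finset.sum_congr rfl fun l _ => ?_
      rcases l with a | a
      · have : G x (Sum.inl a) = 0 := by rcases x with x | x <;> simp [hG]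
        simp [this]
      · rw [hB']
        simp
    -- the four structural zero facts
    have f1 : ∀ (a : Fin 1) (y : Fin 1 ⊕ Fin k), P11 (Sum.inl a) y = 0 := by
      intro a y; rcases y with y | y <;> simp [hP11def]
    have f2 : ∀ (a : Fin 1) (j : Fin v), j ∈ T → (B' * K) (Sum.inl a) j = 0 := by
      intro a j hj
      rw [mulK_apply _ hK]
      have : B' (Sum.inl a) j = 0 := by
        rw [hB']
        have : a = 0 := Subsingleton.elim a 0
        simp [this, hj]
      rw [this, zero_mul]
    have frow : ∀ i, i ∉ T → ∀ y, M (Sum.inr i) (Sum.inl y) = 0 := by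
      intro i hi y
      rw [hMeq, Matrix.fromBlocks_apply₂₁]
      have hWr : ∀ (Y : Matrix (Fin 1 ⊕ Fin k) (Fin 1 ⊕ Fin k) ℂ) (y : Fin 1 ⊕ Fin k),
          (W * Y) i y = ((C * G) * Y) i y := by
        intro Y y
        rw [Matrix.mul_apply, Matrix.mul_apply]
        refine Finset.sum_congr rfl fun l _ => ?_
        rw [hW]; simp [hi]
      rw [Matrix.add_apply, hWr, Matrix.mul_assoc, hGP11]
      rcases y with y | y
      · have h1 : (C * (Matrix.fromBlocks 0 0 0 (-1) :
            Matrix (Fin 1 ⊕ Fin k) (Fin 1 ⊕ Fin k) ℂ)) i (Sum.inl y) = 0 := by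
          rw [Matrix.mul_apply]
          simp [Fintype.sum_sum_type]
        rw [h1, hC']
        have hy : y = 0 := Subsingleton.elim y 0
        subst hy
        simp [hi]
      · have h1 : (C * (Matrix.fromBlocks 0 0 0 (-1) :
            Matrix (Fin 1 ⊕ Fin k) (Fin 1 ⊕ Fin k) ℂ)) i (Sum.inr y) = - C i (Sum.inr y) := by
          rw [Matrix.mul_apply]
          simp [Fintype.sum_sum_type, Matrix.one_apply]
        rw [h1, hC']
        simp
    have f4 : ∀ i j, i ∉ T → j ∈ T → M (Sum.inr i) (Sum.inr j) = 0 := by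
      intro i j hi hj
      rw [hMeq, Matrix.fromBlocks_apply₂₂]
      have hij : i ≠ j := fun h => hi (h ▸ hj)
      have hWr : (W * (B' * K)) i j = ((C * G) * (B' * K)) i j := by
        rw [Matrix.mul_apply, Matrix.mul_apply]
        refine Finset.sum_congr rfl fun l _ => ?_
        rw [hW]; simp [hi]
      rw [Matrix.add_apply, hWr, ← Matrix.mul_assoc, Matrix.mul_assoc C G B', hGB',
        ← Matrix.mul_assoc, mulK_apply _ hK, Matrix.sub_apply, Matrix.one_apply_ne hij,
        mulK_apply _ hK]
      rw [hD']
      simp [hi, hj]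
    -- entry-level zero facts for M
    have g1 : ∀ (a : Fin 1) (y : Fin 1 ⊕ Fin k), M (Sum.inl (Sum.inl a)) (Sum.inl y) = 0 := by
      intro a y; rw [hMeq, Matrix.fromBlocks_apply₁₁]; exact f1 a y
    have g2 : ∀ (a : Fin 1) (j : Fin v), j ∈ T → M (Sum.inl (Sum.inl a)) (Sum.inr j) = 0 := by
      intro a j hj; rw [hMeq, Matrix.fromBlocks_apply₁₂]; exact f2 a j hj
    -- the column family restricted to "good" rows
    set er : (Fin k ⊕ {j : Fin v // j ∈ T}) → ((Fin 1 ⊕ Fin k) ⊕ Fin v) :=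
      Sum.elim (fun b => Sum.inl (Sum.inr b)) (fun j => Sum.inr j.1) with her
    set f : ((Fin 1 ⊕ Fin k) ⊕ {j : Fin v // j ∈ T}) → ((Fin k ⊕ {j : Fin v // j ∈ T}) → ℂ) :=
      fun c r => M (er r) (Sum.map id Subtype.val c) with hf
    have hnotli : ¬ LinearIndependent ℂ f := by
      intro hli
      have h1 := hli.fintype_card_le_finrank
      rw [Module.finrank_fintype_fun_eq_card] at h1
      simp only [Fintype.card_sum, Fintype.card_fin, Fintype.card_coe] at h1
      omega
    obtain ⟨g, hgsum, c0, hc0⟩ := Fintype.not_linearIndependent_iff.mp hnotli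
    set x : ((Fin 1 ⊕ Fin k) ⊕ Fin v) → ℂ :=
      Sum.elim (fun a => g (Sum.inl a))
        (fun j => if h : j ∈ T then g (Sum.inr ⟨j, h⟩) else 0) with hx
    have hxne : x ≠ 0 := by
      intro h
      apply hc0
      rcases c0 with a | j
      · have := congrFun h (Sum.inl a)
        simpa [hx] using this
      · have := congrFun h (Sum.inr j.1)
        simpa [hx, j.2] using this
    -- the relation evaluated at good rows
    have hrel : ∀ r' : Fin k ⊕ {j : Fin v // j ∈ T},
        (∑ a : Fin 1 ⊕ Fin k, M (er r') (Sum.inl a) * x (Sum.inl a))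
          + ∑ j : {j : Fin v // j ∈ T}, M (er r') (Sum.inr j.1) * g (Sum.inr j) = 0 := by
      intro r'
      have h0 := congrFun hgsum r'
      simp only [Finset.sum_apply, Pi.smul_apply, smul_eq_mul, Pi.zero_apply, hf] at h0
      rw [Fintype.sum_sum_type] at h0
      rw [← h0]
      congr 1 <;> refine Finset.sum_congr rfl fun c _ => ?_
      · simp [hx, mul_comm]
      · simp [Sum.map, mul_comm]
    have hMx : M.mulVec x = 0 := by
      funext r
      rw [Matrix.mulVec, Pi.zero_apply, dotProduct, Fintype.sum_sum_type]
      -- reduce the second sum to a sum over the subtype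
      have hsnd : ∀ r0 : (Fin 1 ⊕ Fin k) ⊕ Fin v,
          (∑ j : Fin v, M r0 (Sum.inr j) * x (Sum.inr j))
            = ∑ j : {j : Fin v // j ∈ T}, M r0 (Sum.inr j.1) * g (Sum.inr j) := by
        intro r0
        have e1 : (∑ j : Fin v, M r0 (Sum.inr j) * x (Sum.inr j))
            = ∑ j ∈ T, M r0 (Sum.inr j) * x (Sum.inr j) :=
          (Finset.sum_subset (Finset.subset_univ T) (fun j _ hj => by simp [hx, hj])).symm
        rw [e1, ← Finset.sum_coe_sort T (fun j => M r0 (Sum.inr j) * x (Sum.inr j))]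
        refine Finset.sum_congr rfl fun j _ => ?_
        simp [hx, j.2]
      rcases r with a | i
      · rcases a with a | b
        · -- bad row: the distinguished first row
          rw [hsnd]
          rw [Finset.sum_eq_zero fun y _ => by rw [g1 a y, zero_mul],
            Finset.sum_eq_zero fun j _ => by rw [g2 a j.1 j.2, zero_mul], add_zero]
        · -- good row inl (inr b)
          rw [hsnd]
          exact hrel (Sum.inl b)
      · by_cases hiT : i ∈ T
        · -- good row
          rw [hsnd]
          exact hrel (Sum.inr ⟨i, hiT⟩)
        · -- bad row
          rw [hsnd]
          rw [Finset.sum_eq_zero fun y _ => by rw [frow i hiT y, zero_mul],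
            Finset.sum_eq_zero fun j _ => by rw [f4 i j.1 hiT j.2, zero_mul], add_zero]
    -- determinants
    have hdetM : M.det = 0 := Matrix.exists_mulVec_eq_zero_iff.mp ⟨x, hxne, hMx⟩
    have hdetP : P.det = 0 := by
      have h2 : M.det = E.det * P.det := by rw [hMdef, Matrix.det_mul]
      rw [hdetE, one_mul] at h2
      rw [← h2, hdetM]
    haveI : Invertible (1 - D' * K) :=
      Matrix.invertibleOfIsUnitDet _ ((Matrix.isUnit_iff_isUnit_det _).mp hKu)
    rw [hP, Matrix.det_fromBlocks₂₂, Matrix.invOf_eq_nonsing_inv] at hdetP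
    have hd1 : (1 - D' * K).det ≠ 0 := by
      have := (Matrix.isUnit_iff_isUnit_det _).mp hKu
      exact this.ne_zero
    have hdet2 : (P11 - B' * K * (1 - D' * K)⁻¹ * C').det = 0 := by
      rcases mul_eq_zero.mp hdetP with h | h
      · exact absurd h hd1
      · exact h
    rw [spectrum.mem_iff, Algebra.algebraMap_eq_smul_one]
    intro hU
    have heq : σ • (1 : Matrix ((Fin 1) ⊕ Fin k) ((Fin 1) ⊕ Fin k) ℂ)
        - (A0 + B' * K * (1 - D' * K)⁻¹ * C')
        = P11 - B' * K * (1 - D' * K)⁻¹ * C' := by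
      rw [sub_add_eq_sub_sub, hP11]
    rw [heq] at hU
    have := (Matrix.isUnit_iff_isUnit_det _).mp hU
    rw [hdet2] at this
    exact (by simpa using this)
  · -- the Frobenius norm bound
    have hB : (∑ i, ∑ j, ‖B i j - B' i j‖ ^ 2) ≤ (T.card : ℝ) * ε ^ 2 := by
      have h1 : ∀ (i : Fin 1 ⊕ Fin k) (j : Fin v),
          ‖B i j - B' i j‖ ^ 2 ≤ if i = Sum.inl 0 ∧ j ∈ T then ε ^ 2 else 0 := by
        intro i j
        rw [hB']
        simp only [Matrix.of_apply]
        by_cases h : i = Sum.inl 0 ∧ j ∈ T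
        · obtain ⟨hi, hj⟩ := h
          subst hi
          simp only [hj, and_self, if_true, sub_zero, true_and]
          exact pow_le_pow_left₀ (norm_nonneg _) (hBsmall j hj) 2
        · simp [h]
      calc ∑ i, ∑ j, ‖B i j - B' i j‖ ^ 2
          ≤ ∑ i : Fin 1 ⊕ Fin k, ∑ j : Fin v,
              (if i = Sum.inl 0 ∧ j ∈ T then ε ^ 2 else 0) :=
            Finset.sum_le_sum fun i _ => Finset.sum_le_sum fun j _ => h1 i j
        _ = (T.card : ℝ) * ε ^ 2 := by
            simp only [ite_and]
            rw [Finset.sum_comm]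
            simp [Finset.sum_ite_eq', Finset.mul_sum, mul_comm]
    have hCb : (∑ i, ∑ j, ‖C i j - C' i j‖ ^ 2) ≤ (Tᶜ.card : ℝ) * ε ^ 2 := by
      have h1 : ∀ (i : Fin v) (j : Fin 1 ⊕ Fin k),
          ‖C i j - C' i j‖ ^ 2 ≤ if j = Sum.inl 0 ∧ i ∉ T then ε ^ 2 else 0 := by
        intro i j
        rw [hC']
        simp only [Matrix.of_apply]
        by_cases h : j = Sum.inl 0 ∧ i ∉ T
        · obtain ⟨hj, hi⟩ := h
          subst hj
          simp only [hi, and_self, if_true, sub_zero, true_and, not_false_iff]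
          exact pow_le_pow_left₀ (norm_nonneg _) (hCsmall i hi) 2
        · simp [h]
      calc ∑ i, ∑ j, ‖C i j - C' i j‖ ^ 2
          ≤ ∑ i : Fin v, ∑ j : Fin 1 ⊕ Fin k,
              (if j = Sum.inl 0 ∧ i ∉ T then ε ^ 2 else 0) :=
            Finset.sum_le_sum fun i _ => Finset.sum_le_sum fun j _ => h1 i j
        _ = (Tᶜ.card : ℝ) * ε ^ 2 := by
            simp only [ite_and]
            simp only [Finset.sum_ite_eq', Finset.mem_univ, if_true]
            have h2 : ∀ y : Fin v,
                (if y ∉ T then ε ^ 2 else 0) = (if y ∈ Tᶜ then ε ^ 2 else 0) := by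
              intro y; simp [Finset.mem_compl]
            simp only [h2]
            rw [Finset.sum_ite_mem, Finset.univ_inter, Finset.sum_const, nsmul_eq_mul]
    have hDb : (∑ i, ∑ j, ‖D i j - D' i j‖ ^ 2) ≤ ((Tᶜ.card * T.card : ℕ) : ℝ) * ε ^ 2 := by
      have h1 : ∀ (i : Fin v) (j : Fin v),
          ‖D i j - D' i j‖ ^ 2 ≤ if i ∉ T ∧ j ∈ T then ε ^ 2 else 0 := by
        intro i j
        rw [hD']
        simp only [Matrix.of_apply]
        by_cases h : i ∉ T ∧ j ∈ T
        · rw [if_pos h, if_pos h]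
          have h2 : ‖D i j - (C * G * B) i j‖ = ‖(C * G * B - D) i j‖ := by
            rw [Matrix.sub_apply, ← norm_neg, neg_sub]
          rw [h2]
          exact pow_le_pow_left₀ (norm_nonneg _) (hMsmall i j h.1 h.2) 2
        · simp [h]
      calc ∑ i, ∑ j, ‖D i j - D' i j‖ ^ 2
          ≤ ∑ i : Fin v, ∑ j : Fin v, (if i ∉ T ∧ j ∈ T then ε ^ 2 else 0) :=
            Finset.sum_le_sum fun i _ => Finset.sum_le_sum fun j _ => h1 i j
        _ = ((Tᶜ.card * T.card : ℕ) : ℝ) * ε ^ 2 := by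
            simp only [ite_and]
            have h2 : ∀ i : Fin v,
                (∑ j : Fin v, if i ∉ T then (if j ∈ T then ε ^ 2 else 0) else 0)
                  = if i ∈ Tᶜ then (T.card : ℝ) * ε ^ 2 else 0 := by
              intro i
              by_cases h : i ∈ T <;>
                simp [h, Finset.mem_compl, Finset.sum_ite_mem, Finset.sum_const,
                  nsmul_eq_mul]
            simp only [h2]
            rw [Finset.sum_ite_mem, Finset.univ_inter, Finset.sum_const, nsmul_eq_mul]
            push_cast
            ring
    have htot : (∑ i, ∑ j, ‖B i j - B' i j‖ ^ 2) + (∑ i, ∑ j, ‖C i j - C' i j‖ ^ 2)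
        + (∑ i, ∑ j, ‖D i j - D' i j‖ ^ 2)
        ≤ ((T.card + Tᶜ.card + Tᶜ.card * T.card : ℕ) : ℝ) * ε ^ 2 := by
      push_cast
      push_cast at hB hCb hDb
      nlinarith [hB, hCb, hDb]
    calc Real.sqrt ((∑ i, ∑ j, ‖B i j - B' i j‖ ^ 2) + (∑ i, ∑ j, ‖C i j - C' i j‖ ^ 2)
          + (∑ i, ∑ j, ‖D i j - D' i j‖ ^ 2))
        ≤ Real.sqrt (((T.card + Tᶜ.card + Tᶜ.card * T.card : ℕ) : ℝ) * ε ^ 2) :=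
          Real.sqrt_le_sqrt htot
      _ = ε * Real.sqrt ((T.card + Tᶜ.card + Tᶜ.card * T.card : ℕ)) := by
          rw [Real.sqrt_mul (by positivity), Real.sqrt_sq hε, mul_comm]
end

section
/- If σ is an eigenvalue of A and for all block-diagonal K̄ (decentralized feedback for the augmented triple (C̄, A, B̄)), σ ∈ sp(A + B̄ K̄ C̄), then for all overlapping feedbacks K with structure K_D ∪ K_e of the original system, σ ∈ sp(A + BKC). Conversely, if some overlapping K moves σ, the corresponding decentralized K̄ for the augmented system moves σ. Hence σ is a DFM of the augmented system iff σ is a fixed mode of the original system with respect to the overlapping controller class. -/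
open Matrix

lemma key_15 {n v : ℕ}
    (B : Matrix (Fin n) (Fin v) ℂ) (C : Matrix (Fin v) (Fin n) ℂ)
    (E : Finset (Fin v × Fin v))
    (Kd : {p : Fin v × Fin v // p.1 = p.2 ∨ p ∈ E} → ℂ)
    (K : Matrix (Fin v) (Fin v) ℂ)
    (hKd : ∀ p, Kd p = K p.1.1 p.1.2)
    (hK0 : ∀ i j, ¬(i = j ∨ (i, j) ∈ E) → K i j = 0) :
    (Matrix.of fun (x : Fin n) (p : {p : Fin v × Fin v // p.1 = p.2 ∨ p ∈ E})
        => B x p.1.1)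
      * Matrix.diagonal Kd
      * (Matrix.of fun (p : {p : Fin v × Fin v // p.1 = p.2 ∨ p ∈ E}) (y : Fin n)
        => C p.1.2 y) = B * K * C := by
  ext x y
  have lhs : ((Matrix.of fun (x : Fin n) (p : {p : Fin v × Fin v // p.1 = p.2 ∨ p ∈ E})
        => B x p.1.1)
      * Matrix.diagonal Kd
      * (Matrix.of fun (p : {p : Fin v × Fin v // p.1 = p.2 ∨ p ∈ E}) (y : Fin n)
        => C p.1.2 y)) x y
      = ∑ p : {p : Fin v × Fin v // p.1 = p.2 ∨ p ∈ E},
          B x p.1.1 * K p.1.1 p.1.2 * C p.1.2 y := by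
    simp only [Matrix.mul_apply, Matrix.of_apply, Matrix.diagonal_apply, ite_mul,
      zero_mul, mul_ite, mul_zero, Finset.sum_ite_eq, Finset.sum_ite_eq', Finset.mem_univ, if_true, hKd]
  rw [lhs]
  have rhs : (B * K * C) x y
      = ∑ q : Fin v × Fin v, B x q.1 * K q.1 q.2 * C q.2 y := by
    simp [Matrix.mul_apply, Finset.sum_mul, Fintype.sum_prod_type]
    rw [Finset.sum_comm]
  rw [rhs]
  classical
  rw [← Finset.sum_subtype (Finset.univ.filter
      (fun q : Fin v × Fin v => q.1 = q.2 ∨ q ∈ E))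
      (p := fun q : Fin v × Fin v => q.1 = q.2 ∨ q ∈ E)
      (by simp) (fun q => B x q.1 * K q.1 q.2 * C q.2 y)]
  refine Finset.sum_subset (Finset.filter_subset _ _) ?_
  intro q _ hq
  simp only [Finset.mem_filter, Finset.mem_univ, true_and] at hq
  rw [hK0 q.1 q.2 (by simpa using hq)]
  ring

/-- With `D = 0` and the augmented system `(C̄, A, B̄)` built from the overlapping
structure `E` (scalar stations, one repeated column block `B_i` and row block `C_j` per
allowed pair `(i,j)`), `σ` is a DFM of the augmented system (fixed under every
block-diagonal `K̄`) if and only if `σ` is a fixed mode of the original system with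
respect to the overlapping controller class. -/
theorem stmt_15 {n v : ℕ} (A : Matrix (Fin n) (Fin n) ℂ)
    (B : Matrix (Fin n) (Fin v) ℂ) (C : Matrix (Fin v) (Fin n) ℂ)
    (E : Finset (Fin v × Fin v)) (hE : ∀ p ∈ E, p.1 ≠ p.2)
    (σ : ℂ) (hσ : σ ∈ spectrum ℂ A) :
    (∀ Kd : {p : Fin v × Fin v // p.1 = p.2 ∨ p ∈ E} → ℂ,
        σ ∈ spectrum ℂ
          (A + (Matrix.of fun (x : Fin n) (p : {p : Fin v × Fin v // p.1 = p.2 ∨ p ∈ E})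
                  => B x p.1.1)
            * Matrix.diagonal Kd
            * (Matrix.of fun (p : {p : Fin v × Fin v // p.1 = p.2 ∨ p ∈ E}) (y : Fin n)
                  => C p.1.2 y)))
      ↔ (∀ K : Matrix (Fin v) (Fin v) ℂ,
          (∀ i j, K i j ≠ 0 → i = j ∨ (i, j) ∈ E) →
          σ ∈ spectrum ℂ (A + B * K * C)) := by
  classical
  constructor
  · intro h K hK
    have := h (fun p => K p.1.1 p.1.2)
    rwa [key_15 B C E _ K (fun p => rfl)
      (fun i j hij => by by_contra h0; exact hij (hK i j h0))] at this
  · intro h Kd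
    set K : Matrix (Fin v) (Fin v) ℂ :=
      Matrix.of fun i j => if hp : i = j ∨ (i, j) ∈ E then Kd ⟨(i, j), hp⟩ else 0 with hKdef
    have := h K (fun i j hij => by
      by_contra h0
      exact hij (by simp [hKdef, Matrix.of_apply, dif_neg h0]))
    rwa [key_15 B C E Kd K
      (fun p => by simp [hKdef, Matrix.of_apply, dif_pos p.2])
      (fun i j h0 => by simp [hKdef, Matrix.of_apply, dif_neg h0])]
end
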